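/- Let i ∈ N be a buyer and ξ ∈ P^i_{w,d} an element of the clinching polytope. Let ξ̄ ∈ ℝ_{≥0}^E be the extension of ξ by zero outside E_i, let w' := w + ξ̄, and let d' ∈ ℝ_{≥0}^N be defined by d'_k := d_k for k ≠ i and d'_i := d_i − ξ(E_i). Then ξ(E_i) ≤ d_i, w' ∈ P, and for every X ⊆ N with i ∉ X it holds that f_{w',d'}(E_X) = f_{w,d}(E_X). -/

import Mathlib

open Finset

noncomputable section

namespace TwoSidedMarket

variable {B S : Type*} [Fintype B] [Fintype S] [DecidableEq B] [DecidableEq S]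

/-- A function `f` on subsets of a ground set `G` is monotone submodular:
`f ∅ = 0`, monotone on subsets of `G`, and submodular on subsets of `G`. -/
def IsMonoSubmodular {α : Type*} [DecidableEq α] (G : Finset α) (f : Finset α → ℝ) : Prop :=
  f ∅ = 0 ∧ (∀ A B : Finset α, A ⊆ B → B ⊆ G → f A ≤ f B) ∧
    ∀ A B : Finset α, A ⊆ G → B ⊆ G → f (A ∩ B) + f (A ∪ B) ≤ f A + f B

/-- Monotone submodular, without the requirement of vanishing at `∅`. -/
def IsMonoSubmodularWeak {α : Type*} [DecidableEq α] (G : Finset α) (f : Finset α → ℝ) : Prop :=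
  (∀ A B : Finset α, A ⊆ B → B ⊆ G → f A ≤ f B) ∧
    ∀ A B : Finset α, A ⊆ G → B ⊆ G → f (A ∩ B) + f (A ∪ B) ≤ f A + f B

/-- `E_i`: the edges of `E` incident to buyer `i`. -/
def Ei (E : Finset (B × S)) (i : B) : Finset (B × S) := E.filter fun e => e.1 = i

/-- `E_j`: the edges of `E` incident to seller `j`. -/
def Ej (E : Finset (B × S)) (j : S) : Finset (B × S) := E.filter fun e => e.2 = j

/-- `E_X`: the edges of `E` incident to some buyer in `X`. -/
def EX (E : Finset (B × S)) (X : Finset B) : Finset (B × S) := E.filter fun e => e.1 ∈ X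

/-- `N_F`: the buyers incident to some edge of `F`. -/
def NF (F : Finset (B × S)) : Finset B := F.image Prod.fst

/-- `x(F) = Σ_{e ∈ F} x e`. -/
def vsum (x : B × S → ℝ) (F : Finset (B × S)) : ℝ := ∑ e ∈ F, x e

/-- Membership `w ∈ P = ⊕_j P_j`: `w` is nonnegative, supported on `E`, and
`w|_{E_j} ∈ P_j` for every seller `j`. -/
def memP (E : Finset (B × S)) (fj : S → Finset (B × S) → ℝ) (w : B × S → ℝ) : Prop :=
  (∀ e, 0 ≤ w e) ∧ (∀ e ∉ E, w e = 0) ∧ ∀ j : S, ∀ F ⊆ Ej E j, vsum w F ≤ fj j F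

/-- `f(F) := Σ_{j ∈ M} f_j (E_j ∩ F)`. -/
def fTot (E : Finset (B × S)) (fj : S → Finset (B × S) → ℝ) (F : Finset (B × S)) : ℝ :=
  ∑ j : S, fj j (Ej E j ∩ F)

/-- `f_w(F) := min_{F ⊆ F' ⊆ E} (f(F') - w(F'))`. -/
def fw (E : Finset (B × S)) (fj : S → Finset (B × S) → ℝ)
    (w : B × S → ℝ) (F : Finset (B × S)) : ℝ :=
  sInf {r : ℝ | ∃ F' : Finset (B × S), F ⊆ F' ∧ F' ⊆ E ∧ r = fTot E fj F' - vsum w F'}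

/-- Membership in the remnant supply polytope `P_{w,d}`. -/
def memPwd (E : Finset (B × S)) (fj : S → Finset (B × S) → ℝ)
    (w : B × S → ℝ) (d : B → ℝ) (x : B × S → ℝ) : Prop :=
  (∀ e, 0 ≤ x e) ∧ (∀ e ∉ E, x e = 0) ∧ memP E fj (w + x) ∧
    ∀ i : B, vsum x (Ei E i) ≤ d i

/-- `f_{w,d}(F) := max_{x ∈ P_{w,d}} x(F)`. -/
def fwd (E : Finset (B × S)) (fj : S → Finset (B × S) → ℝ)
    (w : B × S → ℝ) (d : B → ℝ) (F : Finset (B × S)) : ℝ :=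
  sSup {r : ℝ | ∃ x : B × S → ℝ, memPwd E fj w d x ∧ r = vsum x F}

/-- `P^i_{w,d}(ξ)`: the remnant supply polytope of the buyers other than `i`,
given that buyer `i` receives `ξ`.  (Vectors indexed by `N - i` are encoded as
functions on all of `B` vanishing at `i`.) -/
def PiWd (E : Finset (B × S)) (fj : S → Finset (B × S) → ℝ)
    (w : B × S → ℝ) (d : B → ℝ) (i : B) (ξ : B × S → ℝ) : Set (B → ℝ) :=
  {u | u i = 0 ∧ (∀ k, 0 ≤ u k) ∧
    ∃ x : B × S → ℝ, memPwd E fj w d x ∧ (∀ e ∈ Ei E i, x e = ξ e) ∧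
      ∀ k : B, k ≠ i → vsum x (Ei E k) = u k}

/-- The clinching polytope `P^i_{w,d}` of buyer `i`:
all `ξ ∈ ℝ_{≥0}^{E_i}` with `P^i_{w,d}(ξ) = P^i_{w,d}(0)`. -/
def ClinchP (E : Finset (B × S)) (fj : S → Finset (B × S) → ℝ)
    (w : B × S → ℝ) (d : B → ℝ) (i : B) : Set (B × S → ℝ) :=
  {ξ | (∀ e, 0 ≤ ξ e) ∧ (∀ e ∉ Ei E i, ξ e = 0) ∧
    PiWd E fj w d i ξ = PiWd E fj w d i 0}

/-! Taking `u = 0` in `P^i_{w,d}(0) = P^i_{w,d}(ξ)` yields a point of `P_{w,d}` that agrees with `ξ`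
on `E_i` and loads no other buyer, i.e. `ξ` itself; this gives `ξ(E_i) ≤ d_i` and `w + ξ ∈ P`.
For the invariance of `f_{w,d}` on `E_X`, a point `x ∈ P_{w',d'}` gives `x + ξ ∈ P_{w,d}`, and
conversely, for `x ∈ P_{w,d}` the loads of `x` off `i` lie in `P^i_{w,d}(0) = P^i_{w,d}(ξ)`, so they
are realized by some `y ∈ P_{w,d}` with `y|_{E_i} = ξ`; erasing `y` on `E_i` then gives a point of
`P_{w',d'}` loading every buyer `k ≠ i` exactly as `x` does. -/

section Clinching

omit [Fintype B] [Fintype S]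

variable {E : Finset (B × S)} {fj : S → Finset (B × S) → ℝ} {w x y ξ : B × S → ℝ} {d : B → ℝ}
  {i : B}

omit [DecidableEq B] [DecidableEq S] in
lemma vsum_add (x y : B × S → ℝ) (F : Finset (B × S)) :
    vsum (x + y) F = vsum x F + vsum y F :=
  Finset.sum_add_distrib

omit [DecidableEq B] [DecidableEq S] in
lemma vsum_le_vsum (h : ∀ e, x e ≤ y e) (F : Finset (B × S)) : vsum x F ≤ vsum y F :=
  Finset.sum_le_sum fun e _ => h e

omit [DecidableEq S] in
lemma mem_Ei {e : B × S} : e ∈ Ei E i ↔ e ∈ E ∧ e.1 = i :=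
  Finset.mem_filter

lemma vsum_EX (x : B × S → ℝ) (E : Finset (B × S)) (X : Finset B) :
    vsum x (EX E X) = ∑ k ∈ X, vsum x (Ei E k) := by
  have hEX : EX E X = X.biUnion (Ei E) := by
    ext e
    simp only [EX, Ei, Finset.mem_filter, Finset.mem_biUnion]
    exact ⟨fun ⟨he, hX⟩ => ⟨e.1, hX, he, rfl⟩, fun ⟨_, hk, he, hek⟩ => ⟨he, hek ▸ hk⟩⟩
  rw [vsum, hEX, Finset.sum_biUnion]
  · rfl
  · intro k _ l _ hkl
    exact Finset.disjoint_left.2 fun e hk hl => hkl ((mem_Ei.1 hk).2.symm.trans (mem_Ei.1 hl).2)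

lemma vsum_EX_congr {X : Finset B} (h : ∀ k ∈ X, vsum x (Ei E k) = vsum y (Ei E k)) :
    vsum x (EX E X) = vsum y (EX E X) := by
  rw [vsum_EX, vsum_EX]
  exact Finset.sum_congr rfl h

omit [DecidableEq S] in
lemma vsum_eq_zero_of_support_Ei (hξ : ∀ e ∉ Ei E i, ξ e = 0) {F : Finset (B × S)}
    (hF : ∀ e ∈ F, e.1 ≠ i) : vsum ξ F = 0 :=
  Finset.sum_eq_zero fun e he => hξ e fun hEi => hF e he (mem_Ei.1 hEi).2

def eraseBuyer (E : Finset (B × S)) (i : B) (x : B × S → ℝ) : B × S → ℝ :=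
  fun e => if e ∈ Ei E i then 0 else x e

lemma eraseBuyer_nonneg (hx : ∀ e, 0 ≤ x e) (e : B × S) : 0 ≤ eraseBuyer E i x e := by
  unfold eraseBuyer
  split_ifs
  exacts [le_rfl, hx e]

lemma eraseBuyer_le (hx : ∀ e, 0 ≤ x e) (e : B × S) : eraseBuyer E i x e ≤ x e := by
  unfold eraseBuyer
  split_ifs
  exacts [hx e, le_rfl]

lemma vsum_eraseBuyer_Ei_self : vsum (eraseBuyer E i x) (Ei E i) = 0 :=
  Finset.sum_eq_zero fun _ he => if_pos he

lemma vsum_eraseBuyer_Ei_of_ne {k : B} (hk : k ≠ i) :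
    vsum (eraseBuyer E i x) (Ei E k) = vsum x (Ei E k) :=
  Finset.sum_congr rfl fun _ he => if_neg fun hi => hk ((mem_Ei.1 he).2.symm.trans (mem_Ei.1 hi).2)

lemma add_eraseBuyer (hy : ∀ e ∈ Ei E i, y e = ξ e) (hξ : ∀ e ∉ Ei E i, ξ e = 0) :
    ξ + eraseBuyer E i y = y := by
  funext e
  by_cases he : e ∈ Ei E i
  · simp [eraseBuyer, he, hy e he]
  · simp [eraseBuyer, he, hξ e he]

omit [DecidableEq B] in
lemma memP_of_le (hw : memP E fj w) (h0 : ∀ e, 0 ≤ x e) (hle : ∀ e, x e ≤ w e) :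
    memP E fj x :=
  ⟨h0, fun e he => le_antisymm ((hle e).trans_eq (hw.2.1 e he)) (h0 e),
    fun j F hF => (vsum_le_vsum hle F).trans (hw.2.2 j F hF)⟩

lemma memPwd_of_le (hw : ∀ e, 0 ≤ w e) (hy : memPwd E fj w d y) (h0 : ∀ e, 0 ≤ x e)
    (hle : ∀ e, x e ≤ y e) : memPwd E fj w d x :=
  ⟨h0, fun e he => le_antisymm ((hle e).trans_eq (hy.2.1 e he)) (h0 e),
    memP_of_le hy.2.2.1 (fun e => add_nonneg (hw e) (h0 e))
      (fun e => add_le_add (le_refl (w e)) (hle e)),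
    fun k => (vsum_le_vsum hle _).trans (hy.2.2.2 k)⟩

lemma memPwd_zero (hw : memP E fj w) (hd : ∀ k, 0 ≤ d k) : memPwd E fj w d 0 :=
  ⟨fun _ => le_rfl, fun _ _ => rfl, by simpa using hw, fun k => by simpa [vsum] using hd k⟩

lemma update_load_mem_PiWd_zero (hw : memP E fj w) (hx : memPwd E fj w d x) :
    Function.update (fun k => vsum x (Ei E k)) i 0 ∈ PiWd E fj w d i 0 := by
  refine ⟨Function.update_self i 0 _, fun k => ?_, eraseBuyer E i x,
    memPwd_of_le hw.1 hx (eraseBuyer_nonneg hx.1) (eraseBuyer_le hx.1),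
    fun e he => if_pos he, fun k hk => ?_⟩
  · rcases eq_or_ne k i with rfl | hk
    · simp
    · rw [Function.update_of_ne hk]
      exact Finset.sum_nonneg fun e _ => hx.1 e
  · rw [vsum_eraseBuyer_Ei_of_ne hk, Function.update_of_ne hk]

lemma memPwd_of_mem_ClinchP (hw : memP E fj w) (hd : ∀ k, 0 ≤ d k)
    (hξ : ξ ∈ ClinchP E fj w d i) : memPwd E fj w d ξ := by
  have h0 : (0 : B → ℝ) ∈ PiWd E fj w d i ξ := by
    rw [hξ.2.2]
    simpa [vsum, ← Pi.zero_def] using update_load_mem_PiWd_zero (i := i) hw (memPwd_zero hw hd)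
  obtain ⟨-, -, x, hx, hxξ, hx0⟩ := h0
  suffices x = ξ by rwa [← this]
  funext e
  by_cases hEi : e ∈ Ei E i
  · exact hxξ e hEi
  rw [hξ.2.1 e hEi]
  by_cases hE : e ∈ E
  · have hne : e.1 ≠ i := fun h => hEi (mem_Ei.2 ⟨hE, h⟩)
    exact (Finset.sum_eq_zero_iff_of_nonneg fun f _ => hx.1 f).1 (hx0 e.1 hne) e
      (mem_Ei.2 ⟨hE, rfl⟩)
  · exact hx.2.1 e hE

lemma exists_memPwd_eq_on_Ei_of_mem_ClinchP (hw : memP E fj w) (hξ : ξ ∈ ClinchP E fj w d i)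
    (hx : memPwd E fj w d x) :
    ∃ y, memPwd E fj w d y ∧ (∀ e ∈ Ei E i, y e = ξ e) ∧
      ∀ k ≠ i, vsum y (Ei E k) = vsum x (Ei E k) := by
  have hu := update_load_mem_PiWd_zero (i := i) hw hx
  rw [← hξ.2.2] at hu
  obtain ⟨-, -, y, hy, hyξ, hyx⟩ := hu
  exact ⟨y, hy, hyξ, fun k hk => (hyx k hk).trans (Function.update_of_ne hk ..)⟩

lemma memPwd_add_of_memPwd_clinch (hξ0 : ∀ e, 0 ≤ ξ e) (hξ : ∀ e ∉ Ei E i, ξ e = 0)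
    (hx : memPwd E fj (w + ξ) (Function.update d i (d i - vsum ξ (Ei E i))) x) :
    memPwd E fj w d (x + ξ) := by
  obtain ⟨hx0, hxE, hxP, hxd⟩ := hx
  refine ⟨fun e => add_nonneg (hx0 e) (hξ0 e), fun e he => ?_, ?_, fun k => ?_⟩
  · simp [hxE e he, hξ e fun h => he (mem_Ei.1 h).1]
  · rwa [add_comm x, ← add_assoc]
  · have hk := hxd k
    rw [vsum_add]
    rcases eq_or_ne k i with rfl | hki
    · rw [Function.update_self] at hk
      linarith
    · rw [Function.update_of_ne hki] at hk
      rw [vsum_eq_zero_of_support_Ei hξ fun e he => (mem_Ei.1 he).2 ▸ hki, add_zero]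
      exact hk

lemma memPwd_clinch_eraseBuyer (hy : memPwd E fj w d y) (hyξ : ∀ e ∈ Ei E i, y e = ξ e)
    (hξ : ∀ e ∉ Ei E i, ξ e = 0) :
    memPwd E fj (w + ξ) (Function.update d i (d i - vsum ξ (Ei E i))) (eraseBuyer E i y) := by
  refine ⟨eraseBuyer_nonneg hy.1, fun e he => ?_, ?_, fun k => ?_⟩
  · simp [eraseBuyer, hy.2.1 e he]
  · rw [add_assoc, add_eraseBuyer hyξ hξ]
    exact hy.2.2.1
  · rcases eq_or_ne k i with rfl | hki
    · have hξk : vsum ξ (Ei E k) = vsum y (Ei E k) :=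
        Finset.sum_congr rfl fun e he => (hyξ e he).symm
      rw [vsum_eraseBuyer_Ei_self, Function.update_self, hξk, sub_nonneg]
      exact hy.2.2.2 k
    · rw [vsum_eraseBuyer_Ei_of_ne hki, Function.update_of_ne hki]
      exact hy.2.2.2 k

lemma fwd_eq_of_forall_exists {w' : B × S → ℝ} {d' : B → ℝ} {F : Finset (B × S)}
    (h₁ : ∀ x, memPwd E fj w d x → ∃ y, memPwd E fj w' d' y ∧ vsum y F = vsum x F)
    (h₂ : ∀ y, memPwd E fj w' d' y → ∃ x, memPwd E fj w d x ∧ vsum x F = vsum y F) :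
    fwd E fj w d F = fwd E fj w' d' F := by
  unfold fwd
  congr 1
  ext r
  constructor
  · rintro ⟨x, hx, rfl⟩
    obtain ⟨y, hy, hyx⟩ := h₁ x hx
    exact ⟨y, hy, hyx.symm⟩
  · rintro ⟨y, hy, rfl⟩
    obtain ⟨x, hx, hxy⟩ := h₂ y hy
    exact ⟨x, hx, hxy.symm⟩

end Clinching

theorem clinch_update_invariance_general
    (E : Finset (B × S)) (fj : S → Finset (B × S) → ℝ)
    (w : B × S → ℝ) (hw : memP E fj w)
    (d : B → ℝ) (hd : ∀ i : B, 0 ≤ d i)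
    (i : B) (ξ : B × S → ℝ) (hmem : ξ ∈ ClinchP E fj w d i) :
    vsum ξ (Ei E i) ≤ d i ∧
    memP E fj (w + ξ) ∧
    ∀ X : Finset B, i ∉ X →
      fwd E fj (w + ξ) (Function.update d i (d i - vsum ξ (Ei E i))) (EX E X)
        = fwd E fj w d (EX E X) := by
  obtain ⟨hξ0, hξsupp, -⟩ := id hmem
  have hξ := memPwd_of_mem_ClinchP hw hd hmem
  refine ⟨hξ.2.2.2 i, hξ.2.2.1, fun X hX => fwd_eq_of_forall_exists (fun x hx => ?_) ?_⟩
  · have hξX : vsum ξ (EX E X) = 0 :=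
      vsum_eq_zero_of_support_Ei hξsupp fun e he hi => hX (hi ▸ (Finset.mem_filter.1 he).2)
    exact ⟨x + ξ, memPwd_add_of_memPwd_clinch hξ0 hξsupp hx, by rw [vsum_add, hξX, add_zero]⟩
  · intro x hx
    obtain ⟨y, hy, hyξ, hyx⟩ := exists_memPwd_eq_on_Ei_of_mem_ClinchP hw hmem hx
    refine ⟨eraseBuyer E i y, memPwd_clinch_eraseBuyer hy hyξ hξsupp, vsum_EX_congr fun k hk => ?_⟩
    have hki : k ≠ i := ne_of_mem_of_not_mem hk hX
    rw [vsum_eraseBuyer_Ei_of_ne hki, hyx k hki]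

/-- after buyer `i` clinches `ξ ∈ P^i_{w,d}`, the updated transaction
`w' = w + ξ̄` is feasible, `ξ(E_i) ≤ d_i`, and `f_{w',d'}(E_X) = f_{w,d}(E_X)` for
every `X ⊆ N` with `i ∉ X`, where `d'` agrees with `d` off `i` and
`d'_i = d_i - ξ(E_i)`. -/
theorem clinch_update_invariance
    (E : Finset (B × S)) (fj : S → Finset (B × S) → ℝ)
    (hfj : ∀ j : S, IsMonoSubmodular (Ej E j) (fj j))
    (w : B × S → ℝ) (hw : memP E fj w)
    (d : B → ℝ) (hd : ∀ i : B, 0 ≤ d i)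
    (i : B) (ξ : B × S → ℝ) (hmem : ξ ∈ ClinchP E fj w d i) :
    vsum ξ (Ei E i) ≤ d i ∧
    memP E fj (w + ξ) ∧
    ∀ X : Finset B, i ∉ X →
      fwd E fj (w + ξ) (Function.update d i (d i - vsum ξ (Ei E i))) (EX E X)
        = fwd E fj w d (EX E X) :=
  clinch_update_invariance_general E fj w hw d hd i ξ hmem

end TwoSidedMarket
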